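/- For m ≥ 3, the number of binary strings of length m that end in "110" and contain the substring "110" only in that final position equals F(m) - 1, where F is the Fibonacci sequence with F(0)=0, F(1)=1. -/
import Mathlib

def good : List Bool → Bool
  | [] => true
  | [_] => true
  | [_, _] => true
  | a :: b :: c :: t => !(a && b && !c) && good (b :: c :: t)

lemma good_nil : good [] = true := rfl
lemma good_single (a : Bool) : good [a] = true := rfl
lemma good_pair (a b : Bool) : good [a, b] = true := rfl
lemma good_cons3 (a b c : Bool) (t : List Bool) :
    good (a :: b :: c :: t) = (!(a && b && !c) && good (b :: c :: t)) := rfl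

lemma good_cons_false (t : List Bool) : good (false :: t) = good t := by
  match t with
  | [] => rfl
  | [_] => rfl
  | b :: c :: t => simp [good_cons3]

lemma good_true_false (t : List Bool) : good (true :: false :: t) = good t := by
  match t with
  | [] => rfl
  | c :: t => rw [good_cons3]; simp [good_cons_false]

lemma good_two_ones (t : List Bool) :
    good (true :: true :: t) = true ↔ ∀ x ∈ t, x = true := by
  induction t with
  | nil => simp [good_pair]
  | cons c r ih =>
    cases c with
    | false => simp [good_cons3]
    | true =>
      rw [good_cons3]
      simp only [Bool.and_self, Bool.not_true, Bool.and_false, Bool.false_and,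
        Bool.not_false, Bool.true_and] at *
      simp [ih]

lemma good_iff (l : List Bool) : good l = true ↔
    ∀ i : ℕ, ∀ h : i + 2 < l.length,
      ¬(l[i]'(by omega) = true ∧ l[i+1]'(by omega) = true ∧ l[i+2]'h = false) := by
  match l with
  | [] => simp [good_nil]
  | [a] => simp [good_single]
  | [a, b] => simp [good_pair]
  | a :: b :: c :: t =>
    rw [good_cons3, Bool.and_eq_true, good_iff (b :: c :: t)]
    constructor
    · rintro ⟨h1, h2⟩ i h
      match i with
      | 0 =>
        simp only [List.getElem_cons_zero, List.getElem_cons_succ]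
        rintro ⟨ha, hb, hc⟩
        subst ha; subst hb; subst hc; simp at h1
      | i + 1 =>
        have := h2 i (by simpa using h)
        simpa using this
    · intro h
      constructor
      · have := h 0 (by simp)
        simp only [List.getElem_cons_zero, List.getElem_cons_succ] at this
        cases a <;> cases b <;> cases c <;> simp_all
      · intro i hi
        have := h (i+1) (by simpa using hi)
        simpa using this

def allB : ℕ → Finset (List Bool)
  | 0 => {[]}
  | n+1 => (allB n).image (List.cons false) ∪ (allB n).image (List.cons true)

lemma mem_allB (n : ℕ) (l : List Bool) : l ∈ allB n ↔ l.length = n := by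
  induction n generalizing l with
  | zero => simp [allB, List.length_eq_zero_iff]
  | succ n ih =>
    simp only [allB, Finset.mem_union, Finset.mem_image]
    constructor
    · rintro (⟨t, ht, rfl⟩ | ⟨t, ht, rfl⟩) <;> simp [ih t |>.mp ht]
    · intro hl
      match l with
      | b :: t =>
        cases b
        · exact Or.inl ⟨t, (ih t).mpr (by simpa using hl), rfl⟩
        · exact Or.inr ⟨t, (ih t).mpr (by simpa using hl), rfl⟩

def GS (n : ℕ) : Finset (List Bool) := (allB n).filter (fun l => good l = true)

lemma mem_GS (n : ℕ) (l : List Bool) : l ∈ GS n ↔ l.length = n ∧ good l = true := by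
  simp [GS, mem_allB]

lemma GS_zero : GS 0 = {[]} := by
  ext l; simp [mem_GS, List.length_eq_zero_iff, good_nil]
  rintro rfl; rfl

lemma GS_one : GS 1 = {[false], [true]} := by
  ext l
  simp only [mem_GS, Finset.mem_insert, Finset.mem_singleton]
  constructor
  · rintro ⟨hl, -⟩
    match l with
    | [b] => cases b <;> simp
  · rintro (rfl | rfl) <;> simp [good_single]

lemma GS_succ_succ (n : ℕ) :
    GS (n + 2) = ((GS (n+1)).image (List.cons false)) ∪
      (((GS n).image (fun r => true :: false :: r)) ∪ {List.replicate (n+2) true}) := by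
  ext l
  simp only [Finset.mem_union, Finset.mem_image, Finset.mem_singleton, mem_GS]
  constructor
  · rintro ⟨hl, hg⟩
    match l with
    | b :: c :: t =>
      cases b
      · exact Or.inl ⟨c :: t, ⟨by simpa using hl, by rwa [good_cons_false] at hg⟩, rfl⟩
      · cases c
        · exact Or.inr (Or.inl ⟨t, ⟨by simpa using hl, by rwa [good_true_false] at hg⟩, rfl⟩)
        · refine Or.inr (Or.inr ?_)
          rw [good_two_ones] at hg
          refine List.eq_replicate_iff.mpr ⟨hl, ?_⟩
          intro b hb
          simp only [List.mem_cons] at hb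
          rcases hb with rfl | rfl | hb
          · rfl
          · rfl
          · exact hg b hb
  · rintro (⟨t, ⟨ht, hg⟩, rfl⟩ | ⟨t, ⟨ht, hg⟩, rfl⟩ | rfl)
    · exact ⟨by simp [ht], by rwa [good_cons_false]⟩
    · exact ⟨by simp [ht], by rwa [good_true_false]⟩
    · refine ⟨by simp, ?_⟩
      simp only [List.replicate_succ]
      rw [good_two_ones]
      simp [List.eq_of_mem_replicate]

lemma GS_card (n : ℕ) : (GS (n+2)).card = (GS (n+1)).card + (GS n).card + 1 := by
  rw [GS_succ_succ]
  rw [Finset.card_union_of_disjoint, Finset.card_union_of_disjoint]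
  · rw [Finset.card_image_of_injective _ (List.cons_injective),
      Finset.card_image_of_injective _ (fun a b h => by simpa using h : Function.Injective (fun r => true :: false :: r))]
    simp [add_assoc]
  · rw [Finset.disjoint_left]
    rintro l hl hr
    simp only [Finset.mem_image, Finset.mem_singleton] at hl hr
    obtain ⟨t, -, rfl⟩ := hl
    rw [List.replicate_succ, List.replicate_succ] at hr
    simp at hr
  · rw [Finset.disjoint_left]
    rintro l hl hr
    simp only [Finset.mem_image, Finset.mem_union, Finset.mem_singleton] at hl hr
    obtain ⟨t, -, rfl⟩ := hl
    rcases hr with ⟨r, -, h⟩ | h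
    · simp at h
    · rw [List.replicate_succ] at h; simp at h

lemma GS_card_fib (n : ℕ) : (GS n).card = Nat.fib (n + 3) - 1 := by
  induction n using Nat.strong_induction_on with
  | _ n ih =>
    match n with
    | 0 => simp [GS_zero]; decide
    | 1 => rw [GS_one]; decide
    | n + 2 =>
      rw [GS_card, ih (n+1) (by omega), ih n (by omega)]
      have h1 : Nat.fib (n + 5) = Nat.fib (n + 4) + Nat.fib (n+3) := by
        rw [show n + 5 = (n+3) + 2 by ring, Nat.fib_add_two]; ring
      have h2 : 1 ≤ Nat.fib (n + 3) := Nat.fib_pos.mpr (by omega)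
      have h3 : 1 ≤ Nat.fib (n + 4) := Nat.fib_pos.mpr (by omega)
      simp only [show n+1+3 = n+4 from rfl, show n+2+3 = n+5 from rfl]
      omega

lemma length_GS {n : ℕ} {l : List Bool} (h : l ∈ GS n) : l.length = n := ((mem_GS n l).mp h).1
lemma good_GS {n : ℕ} {l : List Bool} (h : l ∈ GS n) : good l = true := ((mem_GS n l).mp h).2

lemma main_equiv (n : ℕ) :
    Nat.card {s : Fin (n+3) → Bool //
      s ⟨n, by omega⟩ = true ∧ s ⟨n+1, by omega⟩ = true ∧
      s ⟨n+2, by omega⟩ = false ∧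
      ∀ i : ℕ, ∀ h : i + 2 < n + 3,
        s ⟨i, by omega⟩ = true → s ⟨i + 1, by omega⟩ = true → s ⟨i + 2, h⟩ = false →
          i = n} = (GS n).card := by
  rw [← Nat.card_eq_finsetCard]
  refine Nat.card_congr ⟨fun s => ⟨List.ofFn (fun i : Fin n => s.1 ⟨i.1, by omega⟩), ?_⟩,
    fun l => ⟨fun j => if h : (j : ℕ) < n then l.1[(j : ℕ)]'(by rw [length_GS l.2]; exact h)
      else decide ((j : ℕ) < n + 2), ?_⟩, ?_, ?_⟩
  · -- membership in GS n
    rw [mem_GS]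
    refine ⟨by simp, ?_⟩
    rw [good_iff]
    intro i h hpat
    simp only [List.length_ofFn] at h
    simp only [List.getElem_ofFn] at hpat
    obtain ⟨h1, h2, h3⟩ := hpat
    have := s.2.2.2.2 i (by omega) h1 h2 h3
    omega
  · -- condition on the reconstructed function
    refine ⟨?_, ?_, ?_, ?_⟩
    · show (if h : _ < n then _ else _) = _
      rw [dif_neg (by omega : ¬ (n < n))]
      simp
    · show (if h : _ < n then _ else _) = _
      rw [dif_neg (by omega : ¬ (n + 1 < n))]
      simp
    · show (if h : _ < n then _ else _) = _
      rw [dif_neg (by omega : ¬ (n + 2 < n))]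
      simp
    · intro i h hi1 hi2 hi3
      dsimp only at hi1 hi2 hi3
      have hc : i + 2 < n ∨ i + 2 = n ∨ i + 1 = n ∨ i = n := by omega
      rcases hc with hc | hc | hc | hc
      · exfalso
        rw [dif_pos (by omega : i < n)] at hi1
        rw [dif_pos (by omega : i + 1 < n)] at hi2
        rw [dif_pos (by omega : i + 2 < n)] at hi3
        have hg := good_GS l.2
        rw [good_iff] at hg
        exact hg i (by rw [length_GS l.2]; omega) ⟨hi1, hi2, hi3⟩
      · exfalso
        rw [dif_neg (by omega : ¬ (i + 2 < n))] at hi3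
        simp only [decide_eq_false_iff_not] at hi3
        omega
      · exfalso
        rw [dif_neg (by omega : ¬ (i + 2 < n))] at hi3
        simp only [decide_eq_false_iff_not] at hi3
        omega
      · exact hc
  · -- left inverse
    intro s
    apply Subtype.ext
    funext j
    by_cases hj : (j : ℕ) < n
    · dsimp only
      rw [dif_pos hj]
      simp [List.getElem_ofFn]
    · dsimp only
      rw [dif_neg hj]
      obtain ⟨h0, h1, h2, -⟩ := s.2
      have hj3 : (j : ℕ) < n + 3 := j.isLt
      have hc : (j : ℕ) = n ∨ (j : ℕ) = n + 1 ∨ (j : ℕ) = n + 2 := by omega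
      rcases hc with hc | hc | hc
      · rw [show j = ⟨n, by omega⟩ from Fin.ext hc, h0]
        simp
      · rw [show j = ⟨n+1, by omega⟩ from Fin.ext hc, h1]
        simp
      · rw [show j = ⟨n+2, by omega⟩ from Fin.ext hc, h2]
        simp [hc]
  · -- right inverse
    intro l
    apply Subtype.ext
    apply List.ext_getElem
    · simp [length_GS l.2]
    · intro i h1 h2
      simp only [List.getElem_ofFn]
      rw [dif_pos]
      simp only [List.length_ofFn] at h1
      exact h1

/-- For `m ≥ 3`, the number of binary strings of length `m` ending in "110" and
containing "110" only in that final position is `F m - 1`. -/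
theorem count_end_110_only (m : ℕ) (hm : 3 ≤ m) :
    Nat.card {s : Fin m → Bool //
      s ⟨m - 3, by omega⟩ = true ∧ s ⟨m - 2, by omega⟩ = true ∧
      s ⟨m - 1, by omega⟩ = false ∧
      ∀ i : ℕ, ∀ h : i + 2 < m,
        s ⟨i, by omega⟩ = true → s ⟨i + 1, by omega⟩ = true → s ⟨i + 2, h⟩ = false →
          i = m - 3} = Nat.fib m - 1 := by
  obtain ⟨n, rfl⟩ : ∃ n, m = n + 3 := ⟨m - 3, by omega⟩
  rw [show Nat.fib (n + 3) - 1 = (GS n).card from (GS_card_fib n).symm]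
  exact main_equiv n
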